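/- arXiv:2504.17895 — 2 statements merged into one kernel-verified Lean document; each statement's English description precedes it below -/
import Mathlib

section
/- Let H be a real Hilbert space, P : H → H an orthogonal projection, and u(t_j, α_l) ∈ H for 0 ≤ j ≤ M, 0 ≤ l ≤ L with steps Δt_l ≤ T/M and Δα = (α_L - α_0)/L, where L, M ≥ 1. Suppose Σ_{l=0}^{L} ‖(I-P)u(t_0, α_l)‖² + (1/(M+1)) Σ_{j=1}^{M} ‖(I-P)D^t u(t_j, α_0)‖² + (1/N) Σ_{j=1}^{M} Σ_{l=1}^{L} ‖(I-P)D^t D^α u(t_j, α_l)‖² = Λ, where N = (M+1)(L+1). Then max over all j, l of ‖(I-P)u(t_j, α_l)‖² ≤ C Λ with C = 3 max(1, 2T², 4T²(α_L - α_0)²). -/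
/-! Write `Q = I - P`. Since `Q` is linear it commutes with the difference quotients, and summing
the backward differences first in time and then in the parameter gives
`Q u(t_j, α_l) = Q u(t_0, α_l) + Δt_l Σ_{i ≤ j} Q D^t u(t_i, α_0)
  + Δt_l Δα Σ_{i ≤ j} Σ_{k ≤ l} Q D^t D^α u(t_i, α_k)`.
Bounding the square of a sum of `n` vectors by `n` times the sum of their squares, together with
`Δt_l ≤ T / M`, `Δα = (α_L - α_0) / L` and `M + 1 ≤ 2 M`, `L + 1 ≤ 2 L`, each of the three terms
is controlled by the corresponding term of `Λ`. -/

open Finset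

open scoped RealInnerProductSpace

section Telescoping

variable {R E : Type*} [Semiring R] [AddCommGroup E] [Module R E]

lemma sum_Icc_one_sub_pred (f : ℕ → E) (n : ℕ) :
    ∑ i ∈ Icc 1 n, (f i - f (i - 1)) = f n - f 0 := by
  induction n with
  | zero => simp
  | succ n ih =>
    rw [sum_Icc_succ_top (by omega), ih, Nat.add_sub_cancel]
    abel

lemma eq_add_smul_sum_Icc_of_sub_pred_eq_smul {f g : ℕ → E} {c : R} {n : ℕ}
    (hfg : ∀ i ∈ Icc 1 n, f i - f (i - 1) = c • g i) :
    f n = f 0 + c • ∑ i ∈ Icc 1 n, g i := by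
  rw [smul_sum, ← sum_congr rfl hfg, sum_Icc_one_sub_pred]
  abel

lemma eq_add_smul_sum_add_smul_sum_sum {e d dd : ℕ → ℕ → E} {a b : R} {j l : ℕ}
    (he : ∀ i ∈ Icc 1 j, e i l - e (i - 1) l = a • d i l)
    (hd : ∀ i ∈ Icc 1 j, ∀ k ∈ Icc 1 l, d i k - d i (k - 1) = b • dd i k) :
    e j l = e 0 l + a • ∑ i ∈ Icc 1 j, d i 0
      + (a * b) • ∑ i ∈ Icc 1 j, ∑ k ∈ Icc 1 l, dd i k := by
  rw [eq_add_smul_sum_Icc_of_sub_pred_eq_smul he,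
    sum_congr rfl fun i hi ↦ eq_add_smul_sum_Icc_of_sub_pred_eq_smul (hd i hi),
    sum_add_distrib, ← smul_sum, smul_add, mul_smul, add_assoc]

end Telescoping

lemma inv_le_two_mul_inv_add_one {x : ℝ} (hx : 1 ≤ x) : x⁻¹ ≤ 2 * (x + 1)⁻¹ := by
  rw [← div_eq_mul_inv, inv_eq_one_div, div_le_div_iff₀ (by positivity) (by positivity)]
  linarith

lemma add_add_le_max_mul {a b c x y z p q : ℝ} (hx : 0 ≤ x) (hy : 0 ≤ y) (hz : 0 ≤ z)
    (ha : a ≤ x) (hb : b ≤ p * y) (hc : c ≤ q * z) :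
    a + b + c ≤ max 1 (max p q) * (x + y + z) := by
  have h1 : x ≤ max 1 (max p q) * x := le_mul_of_one_le_left hx (le_max_left _ _)
  have h2 : p * y ≤ max 1 (max p q) * y :=
    mul_le_mul_of_nonneg_right ((le_max_left p q).trans (le_max_right _ _)) hy
  have h3 : q * z ≤ max 1 (max p q) * z :=
    mul_le_mul_of_nonneg_right ((le_max_right p q).trans (le_max_right _ _)) hz
  linarith

section NormBounds

variable {E : Type*} [SeminormedAddCommGroup E] {ι : Type*}

lemma norm_sum_sq_le_card_mul_sum_norm_sq (s : Finset ι) (f : ι → E) :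
    ‖∑ i ∈ s, f i‖ ^ 2 ≤ #s * ∑ i ∈ s, ‖f i‖ ^ 2 :=
  (pow_le_pow_left₀ (norm_nonneg _) (norm_sum_le _ _) 2).trans sq_sum_le_card_mul_sum_sq

lemma norm_add_add_sq_le (a b c : E) :
    ‖a + b + c‖ ^ 2 ≤ 3 * (‖a‖ ^ 2 + ‖b‖ ^ 2 + ‖c‖ ^ 2) := by
  simpa [Fin.sum_univ_three, add_assoc] using
    norm_sum_sq_le_card_mul_sum_norm_sq univ ![a, b, c]

lemma norm_sum_sq_le_of_subset {s t : Finset ι} (hst : s ⊆ t) {n : ℕ} (hs : #s ≤ n)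
    (f : ι → E) : ‖∑ i ∈ s, f i‖ ^ 2 ≤ n * ∑ i ∈ t, ‖f i‖ ^ 2 :=
  (norm_sum_sq_le_card_mul_sum_norm_sq s f).trans <|
    mul_le_mul (by exact_mod_cast hs)
      (sum_le_sum_of_subset_of_nonneg hst fun _ _ _ ↦ by positivity)
      (by positivity) (by positivity)

lemma norm_smul_sum_sq_le [NormedSpace ℝ E] {s t : Finset ι} (hst : s ⊆ t) {n : ℕ}
    (hs : #s ≤ n) {c h : ℝ} (hc : |c| ≤ h / n) (f : ι → E) :
    ‖c • ∑ i ∈ s, f i‖ ^ 2 ≤ h ^ 2 / n * ∑ i ∈ t, ‖f i‖ ^ 2 := by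
  rw [norm_smul, Real.norm_eq_abs, mul_pow]
  calc |c| ^ 2 * ‖∑ i ∈ s, f i‖ ^ 2 ≤ (h / n) ^ 2 * (n * ∑ i ∈ t, ‖f i‖ ^ 2) :=
        mul_le_mul (pow_le_pow_left₀ (abs_nonneg c) hc 2) (norm_sum_sq_le_of_subset hst hs f)
          (by positivity) (by positivity)
    _ = h ^ 2 / n * ∑ i ∈ t, ‖f i‖ ^ 2 := by
        rcases eq_or_ne (n : ℝ) 0 with hn | hn
        · simp [hn]
        · field_simp

lemma norm_smul_sum_Icc_sq_le [NormedSpace ℝ E] {M j : ℕ} (hM : 1 ≤ M) (hj : j ≤ M)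
    {c T : ℝ} (hc : |c| ≤ T / M) (f : ℕ → E) :
    ‖c • ∑ i ∈ Icc 1 j, f i‖ ^ 2 ≤ 2 * T ^ 2 * (1 / (M + 1 : ℝ) * ∑ i ∈ Icc 1 M, ‖f i‖ ^ 2) := by
  refine (norm_smul_sum_sq_le (Icc_subset_Icc_right hj) (by simpa) hc f).trans ?_
  have hM_inv := inv_le_two_mul_inv_add_one (x := (M : ℝ)) (by exact_mod_cast hM)
  calc _ = T ^ 2 * (M : ℝ)⁻¹ * ∑ i ∈ Icc 1 M, ‖f i‖ ^ 2 := by ring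
    _ ≤ T ^ 2 * (2 * (M + 1 : ℝ)⁻¹) * ∑ i ∈ Icc 1 M, ‖f i‖ ^ 2 := by gcongr
    _ = _ := by ring

lemma norm_smul_sum_Icc_sum_Icc_sq_le [NormedSpace ℝ E] {M L j l : ℕ} (hM : 1 ≤ M) (hL : 1 ≤ L)
    (hj : j ≤ M) (hl : l ≤ L) {c T δ : ℝ} (hc : |c| ≤ T / M * (δ / L)) (g : ℕ → ℕ → E) :
    ‖c • ∑ i ∈ Icc 1 j, ∑ k ∈ Icc 1 l, g i k‖ ^ 2
      ≤ 4 * T ^ 2 * δ ^ 2 * (1 / ((M + 1) * (L + 1) : ℝ) *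
        ∑ i ∈ Icc 1 M, ∑ k ∈ Icc 1 L, ‖g i k‖ ^ 2) := by
  rw [← sum_product', ← sum_product' (f := fun i k ↦ ‖g i k‖ ^ 2)]
  refine (norm_smul_sum_sq_le (n := M * L) (h := T * δ)
    (product_subset_product (Icc_subset_Icc_right hj) (Icc_subset_Icc_right hl))
    (by simp only [card_product, Nat.card_Icc]; gcongr <;> omega)
    (by push_cast; convert hc using 1; ring) _).trans ?_
  have hM_inv := inv_le_two_mul_inv_add_one (x := (M : ℝ)) (by exact_mod_cast hM)
  have hL_inv := inv_le_two_mul_inv_add_one (x := (L : ℝ)) (by exact_mod_cast hL)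
  calc _ = T ^ 2 * δ ^ 2 * ((M : ℝ)⁻¹ * (L : ℝ)⁻¹) *
        ∑ p ∈ Icc 1 M ×ˢ Icc 1 L, ‖g p.1 p.2‖ ^ 2 := by push_cast; ring
    _ ≤ T ^ 2 * δ ^ 2 * ((2 * (M + 1 : ℝ)⁻¹) * (2 * (L + 1 : ℝ)⁻¹)) *
        ∑ p ∈ Icc 1 M ×ˢ Icc 1 L, ‖g p.1 p.2‖ ^ 2 := by gcongr
    _ = _ := by rw [one_div, mul_inv]; ring

end NormBounds

theorem pointwise_projection_bound_general
    {H : Type*} [NormedAddCommGroup H] [InnerProductSpace ℝ H]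
    (P : H →ₗ[ℝ] H)
    (M L : ℕ) (hM : 1 ≤ M) (hL : 1 ≤ L)
    (u : ℕ → ℕ → H) (T α0 αL : ℝ) (hα : α0 < αL)
    (Δt : ℕ → ℝ) (hΔt : ∀ l ≤ L, 0 < Δt l ∧ Δt l ≤ T / M)
    (Δα : ℝ) (hΔα : Δα = (αL - α0) / L)
    (Dt : ℕ → ℕ → H) (hDt : ∀ j l, Dt j l = (Δt l)⁻¹ • (u j l - u (j - 1) l))
    (DtDa : ℕ → ℕ → H) (hDtDa : ∀ j l, DtDa j l = Δα⁻¹ • (Dt j l - Dt j (l - 1)))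
    (Λ : ℝ)
    (hsum :
      (∑ l ∈ Finset.range (L + 1), ‖u 0 l - P (u 0 l)‖ ^ 2)
      + (1 / (M + 1 : ℝ)) * ∑ j ∈ Finset.Icc 1 M, ‖Dt j 0 - P (Dt j 0)‖ ^ 2
      + (1 / ((M + 1) * (L + 1) : ℝ)) *
          ∑ j ∈ Finset.Icc 1 M, ∑ l ∈ Finset.Icc 1 L, ‖DtDa j l - P (DtDa j l)‖ ^ 2
        = Λ) :
    ∀ j ≤ M, ∀ l ≤ L,
      ‖u j l - P (u j l)‖ ^ 2 ≤
        3 * max 1 (max (2 * T ^ 2) (4 * T ^ 2 * (αL - α0) ^ 2)) * Λ := by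
  intro j hj l hl
  set Q : H →ₗ[ℝ] H := LinearMap.id - P
  simp only [show ∀ x, x - P x = Q x from fun _ ↦ rfl] at hsum ⊢
  obtain ⟨hΔt_pos, hΔt_le⟩ := hΔt l hl
  have hΔα_pos : 0 < Δα := hΔα ▸ div_pos (sub_pos.2 hα) (by positivity)
  have hdecomp := eq_add_smul_sum_add_smul_sum_sum (e := fun i k ↦ Q (u i k))
    (d := fun i k ↦ Q (Dt i k)) (dd := fun i k ↦ Q (DtDa i k)) (j := j) (l := l)
    (fun i _ ↦ by rw [hDt, map_smul, smul_inv_smul₀ hΔt_pos.ne', map_sub])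
    (fun i _ k _ ↦ by rw [hDtDa, map_smul, smul_inv_smul₀ hΔα_pos.ne', map_sub])
  rw [hdecomp]
  refine (norm_add_add_sq_le _ _ _).trans ?_
  rw [← hsum, mul_assoc]
  gcongr
  refine add_add_le_max_mul (by positivity) (by positivity) (by positivity)
    (single_le_sum (f := fun k ↦ ‖Q (u 0 k)‖ ^ 2) (fun _ _ ↦ by positivity)
      (mem_range.2 (by omega)))
    (norm_smul_sum_Icc_sq_le hM hj (by rwa [abs_of_pos hΔt_pos]) _)
    (norm_smul_sum_Icc_sum_Icc_sq_le hM hL hj hl ?_ _)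
  rw [abs_of_pos (mul_pos hΔt_pos hΔα_pos), ← hΔα]
  gcongr

/-- Lemma 2 of the paper: pointwise-in-time (and in the parameter) bound for the
projection error in terms of the POD eigenvalue tail `Λ`. -/
theorem pointwise_projection_bound
    {H : Type*} [NormedAddCommGroup H] [InnerProductSpace ℝ H]
    (P : H →ₗ[ℝ] H)
    (hPidem : ∀ x, P (P x) = P x)
    (hPsa : ∀ x y : H, ⟪P x, y⟫ = ⟪x, P y⟫)
    (M L : ℕ) (hM : 1 ≤ M) (hL : 1 ≤ L)
    (u : ℕ → ℕ → H) (T α0 αL : ℝ) (hT : 0 < T) (hα : α0 < αL)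
    (Δt : ℕ → ℝ) (hΔt : ∀ l ≤ L, 0 < Δt l ∧ Δt l ≤ T / M)
    (Δα : ℝ) (hΔα : Δα = (αL - α0) / L)
    (Dt : ℕ → ℕ → H) (hDt : ∀ j l, Dt j l = (Δt l)⁻¹ • (u j l - u (j - 1) l))
    (DtDa : ℕ → ℕ → H) (hDtDa : ∀ j l, DtDa j l = Δα⁻¹ • (Dt j l - Dt j (l - 1)))
    (Λ : ℝ)
    (hsum :
      (∑ l ∈ Finset.range (L + 1), ‖u 0 l - P (u 0 l)‖ ^ 2)
      + (1 / (M + 1 : ℝ)) * ∑ j ∈ Finset.Icc 1 M, ‖Dt j 0 - P (Dt j 0)‖ ^ 2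
      + (1 / ((M + 1) * (L + 1) : ℝ)) *
          ∑ j ∈ Finset.Icc 1 M, ∑ l ∈ Finset.Icc 1 L, ‖DtDa j l - P (DtDa j l)‖ ^ 2
        = Λ) :
    ∀ j ≤ M, ∀ l ≤ L,
      ‖u j l - P (u j l)‖ ^ 2 ≤
        3 * max 1 (max (2 * T ^ 2) (4 * T ^ 2 * (αL - α0) ^ 2)) * Λ :=
  pointwise_projection_bound_general P M L hM hL u T α0 αL hα Δt hΔt Δα hΔα Dt hDt DtDa hDtDa Λ hsum
end

section
/- Let H be a real Hilbert space, P : H → H an orthogonal projection, and u(t_j, α_l, β_k) ∈ H for 0 ≤ j ≤ M, 0 ≤ l ≤ L, 0 ≤ k ≤ S, with L, M, S ≥ 1, steps Δt = T/M, Δα = (α_L-α_0)/L, Δβ = (β_S-β_0)/S, and N = (M+1)(L+1)(S+1). Suppose Σ_{l,k} ‖(I-P)u(t_0,α_l,β_k)‖² + (1/(M+1)) Σ_{j=1}^{M} Σ_{k=0}^{S} ‖(I-P)D^t u(t_j,α_0,β_k)‖² + (1/((M+1)(L+1))) Σ_{j=1}^{M} Σ_{l=1}^{L} ‖(I-P)D^t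 D^α u(t_j,α_l,β_0)‖² + (1/N) Σ_{j,l,k≥1} ‖(I-P)D^t D^α D^β u(t_j,α_l,β_k)‖² = Λ. Then max_{j,l,k} ‖(I-P)u(t_j,α_l,β_k)‖² ≤ C Λ with C = 4 max(1, 2T², 4T²(α_L-α_0)², 8T²(α_L-α_0)²(β_S-β_0)²). -/
/-!
Telescoping the backward differences first in `t`, then in `α`, then in `β` writes
`(I - P) u(t_j, α_l, β_k)` as its initial value plus `Δt`, `Δt Δα` and `Δt Δα Δβ` times sums of
the projected difference quotients over at most `M`, `M L` and `M L S` grid points. Squaring,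
the four-term inequality and Cauchy–Schwarz bound the error by `4` times the sum of the squared
pieces, with weights `Δt² M = T² / M ≤ 2 T² / (M + 1)` and their products in `α` and `β`.
-/

open Finset

open scoped RealInnerProductSpace

section Telescoping

variable {𝕜 E : Type*} [DivisionRing 𝕜] [AddCommGroup E] [Module 𝕜 E]

lemma sum_Icc_sub_pred (g : ℕ → E) (j : ℕ) :
    ∑ i ∈ Icc 1 j, (g i - g (i - 1)) = g j - g 0 := by
  induction j with
  | zero => simp
  | succ n ih =>
    rw [sum_Icc_succ_top (by omega), ih, Nat.add_sub_cancel]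
    abel

lemma eq_add_smul_sum_of_backward_diff {g D : ℕ → E} {h : 𝕜} (hh : h ≠ 0)
    (hD : ∀ i, D i = h⁻¹ • (g i - g (i - 1))) (j : ℕ) :
    g j = g 0 + h • ∑ i ∈ Icc 1 j, D i := by
  simp only [hD, smul_sum, smul_smul, mul_inv_cancel₀ hh, one_smul, sum_Icc_sub_pred]
  abel

lemma eq_add_smul_sums_of_mixed_backward_diffs {w Dt DtDa DtDaDb : ℕ → ℕ → ℕ → E}
    {ht ha hb : 𝕜} (hht : ht ≠ 0) (hha : ha ≠ 0) (hhb : hb ≠ 0)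
    (hDt : ∀ j l k, Dt j l k = ht⁻¹ • (w j l k - w (j - 1) l k))
    (hDtDa : ∀ j l k, DtDa j l k = ha⁻¹ • (Dt j l k - Dt j (l - 1) k))
    (hDtDaDb : ∀ j l k, DtDaDb j l k = hb⁻¹ • (DtDa j l k - DtDa j l (k - 1)))
    (j l k : ℕ) :
    w j l k = w 0 l k + ht • ∑ j' ∈ Icc 1 j, Dt j' 0 k
      + (ht * ha) • ∑ j' ∈ Icc 1 j, ∑ l' ∈ Icc 1 l, DtDa j' l' 0
      + (ht * ha * hb) • ∑ j' ∈ Icc 1 j, ∑ l' ∈ Icc 1 l, ∑ k' ∈ Icc 1 k, DtDaDb j' l' k' := by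
  have expand_Dt j' : Dt j' l k = Dt j' 0 k + ha • ∑ l' ∈ Icc 1 l,
      (DtDa j' l' 0 + hb • ∑ k' ∈ Icc 1 k, DtDaDb j' l' k') := by
    rw [eq_add_smul_sum_of_backward_diff hha (hDtDa j' · k) l]
    congr 2
    exact sum_congr rfl fun l' _ => eq_add_smul_sum_of_backward_diff hhb (hDtDaDb j' l' ·) k
  rw [eq_add_smul_sum_of_backward_diff hht (hDt · l k) j]
  simp only [expand_Dt, sum_add_distrib, smul_sum, smul_add, smul_smul, mul_assoc]
  abel

end Telescoping

section NormEstimates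

variable {ι E : Type*} [SeminormedAddCommGroup E]

lemma norm_sum_sq_le_card_mul_sum_sq (s : Finset ι) (v : ι → E) :
    ‖∑ i ∈ s, v i‖ ^ 2 ≤ #s * ∑ i ∈ s, ‖v i‖ ^ 2 :=
  calc ‖∑ i ∈ s, v i‖ ^ 2 ≤ (∑ i ∈ s, ‖v i‖) ^ 2 := by gcongr; exact norm_sum_le _ _
    _ ≤ #s * ∑ i ∈ s, ‖v i‖ ^ 2 := sq_sum_le_card_mul_sum_sq

lemma norm_add_add_add_sq_le (a b c d : E) :
    ‖a + b + c + d‖ ^ 2 ≤ 4 * (‖a‖ ^ 2 + ‖b‖ ^ 2 + ‖c‖ ^ 2 + ‖d‖ ^ 2) := by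
  simpa [Fin.sum_univ_four, add_assoc] using
    norm_sum_sq_le_card_mul_sum_sq Finset.univ ![a, b, c, d]

lemma norm_smul_sum_sq_le_of_subset [NormedSpace ℝ E] {s t : Finset ι} (hst : s ⊆ t)
    {N : ℝ} (hN : (#s : ℝ) ≤ N) (r : ℝ) (v : ι → E) :
    ‖r • ∑ i ∈ s, v i‖ ^ 2 ≤ r ^ 2 * N * ∑ i ∈ t, ‖v i‖ ^ 2 := by
  rw [norm_smul, mul_pow, Real.norm_eq_abs, sq_abs, mul_assoc]
  gcongr
  calc ‖∑ i ∈ s, v i‖ ^ 2 ≤ #s * ∑ i ∈ s, ‖v i‖ ^ 2 := norm_sum_sq_le_card_mul_sum_sq s v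
    _ ≤ N * ∑ i ∈ t, ‖v i‖ ^ 2 := by
      refine mul_le_mul hN ?_ (by positivity) ((Nat.cast_nonneg _).trans hN)
      exact sum_le_sum_of_subset_of_nonneg hst fun _ _ _ => by positivity

end NormEstimates

lemma norm_sq_le_of_mixed_backward_diffs {E : Type*} [SeminormedAddCommGroup E]
    [NormedSpace ℝ E] {w Dt DtDa DtDaDb : ℕ → ℕ → ℕ → E}
    {ht ha hb : ℝ} (hht : ht ≠ 0) (hha : ha ≠ 0) (hhb : hb ≠ 0)
    (hDt : ∀ j l k, Dt j l k = ht⁻¹ • (w j l k - w (j - 1) l k))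
    (hDtDa : ∀ j l k, DtDa j l k = ha⁻¹ • (Dt j l k - Dt j (l - 1) k))
    (hDtDaDb : ∀ j l k, DtDaDb j l k = hb⁻¹ • (DtDa j l k - DtDa j l (k - 1)))
    {M L S j l k : ℕ} (hj : j ≤ M) (hl : l ≤ L) (hk : k ≤ S) :
    ‖w j l k‖ ^ 2 ≤ 4 * (∑ l ∈ range (L + 1), ∑ k ∈ range (S + 1), ‖w 0 l k‖ ^ 2
      + ht ^ 2 * M * ∑ j ∈ Icc 1 M, ∑ k ∈ range (S + 1), ‖Dt j 0 k‖ ^ 2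
      + ht ^ 2 * M * (ha ^ 2 * L) * ∑ j ∈ Icc 1 M, ∑ l ∈ Icc 1 L, ‖DtDa j l 0‖ ^ 2
      + ht ^ 2 * M * (ha ^ 2 * L) * (hb ^ 2 * S) *
          ∑ j ∈ Icc 1 M, ∑ l ∈ Icc 1 L, ∑ k ∈ Icc 1 S, ‖DtDaDb j l k‖ ^ 2) := by
  rw [eq_add_smul_sums_of_mixed_backward_diffs hht hha hhb hDt hDtDa hDtDaDb]
  refine (norm_add_add_add_sq_le _ _ _ _).trans ?_
  gcongr 4 * (?_ + ?_ + ?_ + ?_)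
  · have hmem : (l, k) ∈ range (L + 1) ×ˢ range (S + 1) := by simp; omega
    rw [← sum_product']
    exact single_le_sum (f := fun p => ‖w 0 p.1 p.2‖ ^ 2) (fun _ _ => by positivity) hmem
  · have h : ∑ j' ∈ Icc 1 j, Dt j' 0 k = ∑ p ∈ Icc 1 j ×ˢ {k}, Dt p.1 0 p.2 := by simp
    rw [h, ← sum_product']
    refine norm_smul_sum_sq_le_of_subset (product_subset_product (Icc_subset_Icc_right hj)
      (singleton_subset_iff.2 (mem_range.2 (by omega)))) ?_ _ _
    simp only [card_product, Nat.card_Icc, card_singleton, Nat.add_sub_cancel, mul_one]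
    exact_mod_cast hj
  · simp only [← sum_product']
    refine (norm_smul_sum_sq_le_of_subset (N := M * L) (product_subset_product
      (Icc_subset_Icc_right hj) (Icc_subset_Icc_right hl)) ?_ _ _).trans_eq (by ring)
    simp only [card_product, Nat.card_Icc, Nat.add_sub_cancel]
    exact_mod_cast Nat.mul_le_mul hj hl
  · simp only [← sum_product']
    refine (norm_smul_sum_sq_le_of_subset (N := M * L * S) (product_subset_product
      (Icc_subset_Icc_right hj) (product_subset_product (Icc_subset_Icc_right hl)
        (Icc_subset_Icc_right hk))) ?_ _ _).trans_eq (by ring)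
    simp only [card_product, Nat.card_Icc, Nat.add_sub_cancel]
    rw [← mul_assoc]
    exact_mod_cast Nat.mul_le_mul (Nat.mul_le_mul hj hl) hk

lemma sq_div_mul_self_le {x : ℝ} (hx : 1 ≤ x) (c : ℝ) :
    (c / x) ^ 2 * x ≤ 2 * c ^ 2 / (x + 1) := by
  have hx0 : 0 < x := by linarith
  rw [div_pow, div_mul_eq_mul_div, div_le_div_iff₀ (by positivity) (by positivity)]
  nlinarith [mul_nonneg (mul_nonneg (sq_nonneg c) hx0.le) (sub_nonneg.2 hx)]

lemma add_weighted_le_max_mul {m l s T a b A₀ A₁ A₂ A₃ : ℝ} (hm : 0 ≤ m) (hl : 0 ≤ l)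
    (hs : 0 ≤ s) (hA₀ : 0 ≤ A₀) (hA₁ : 0 ≤ A₁) (hA₂ : 0 ≤ A₂) (hA₃ : 0 ≤ A₃) :
    A₀ + 2 * T ^ 2 / m * A₁ + 2 * T ^ 2 / m * (2 * a ^ 2 / l) * A₂
        + 2 * T ^ 2 / m * (2 * a ^ 2 / l) * (2 * b ^ 2 / s) * A₃ ≤
      max 1 (max (2 * T ^ 2) (max (4 * T ^ 2 * a ^ 2) (8 * T ^ 2 * a ^ 2 * b ^ 2))) *
        (A₀ + 1 / m * A₁ + 1 / (m * l) * A₂ + 1 / (m * l * s) * A₃) := by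
  set C := max 1 (max (2 * T ^ 2) (max (4 * T ^ 2 * a ^ 2) (8 * T ^ 2 * a ^ 2 * b ^ 2)))
  have h₀ : A₀ ≤ C * A₀ := le_mul_of_one_le_left hA₀ (le_max_left _ _)
  have h₁ : 2 * T ^ 2 * (1 / m * A₁) ≤ C * (1 / m * A₁) := by
    gcongr
    exact le_max_of_le_right (le_max_left _ _)
  have h₂ : 4 * T ^ 2 * a ^ 2 * (1 / (m * l) * A₂) ≤ C * (1 / (m * l) * A₂) := by
    gcongr
    exact le_max_of_le_right (le_max_of_le_right (le_max_left _ _))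
  have h₃ : 8 * T ^ 2 * a ^ 2 * b ^ 2 * (1 / (m * l * s) * A₃) ≤
      C * (1 / (m * l * s) * A₃) := by
    gcongr
    exact le_max_of_le_right (le_max_of_le_right (le_max_right _ _))
  linear_combination h₀ + h₁ + h₂ + h₃

theorem pointwise_projection_bound_two_parameters_general
    {H : Type*} [NormedAddCommGroup H] [InnerProductSpace ℝ H]
    (P : H →ₗ[ℝ] H)
    (M L S : ℕ) (hM : 1 ≤ M) (hL : 1 ≤ L) (hS : 1 ≤ S)
    (u : ℕ → ℕ → ℕ → H) (T α0 αL β0 βS : ℝ)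
    (hT : 0 < T) (hα : α0 < αL) (hβ : β0 < βS)
    (Δt Δα Δβ : ℝ) (hΔt : Δt = T / M) (hΔα : Δα = (αL - α0) / L)
    (hΔβ : Δβ = (βS - β0) / S)
    (Dt : ℕ → ℕ → ℕ → H)
    (hDt : ∀ j l k, Dt j l k = Δt⁻¹ • (u j l k - u (j - 1) l k))
    (DtDa : ℕ → ℕ → ℕ → H)
    (hDtDa : ∀ j l k, DtDa j l k = Δα⁻¹ • (Dt j l k - Dt j (l - 1) k))
    (DtDaDb : ℕ → ℕ → ℕ → H)
    (hDtDaDb : ∀ j l k, DtDaDb j l k = Δβ⁻¹ • (DtDa j l k - DtDa j l (k - 1)))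
    (Λ : ℝ)
    (hsum :
      (∑ l ∈ Finset.range (L + 1), ∑ k ∈ Finset.range (S + 1),
          ‖u 0 l k - P (u 0 l k)‖ ^ 2)
      + (1 / (M + 1 : ℝ)) * ∑ j ∈ Finset.Icc 1 M, ∑ k ∈ Finset.range (S + 1),
          ‖Dt j 0 k - P (Dt j 0 k)‖ ^ 2
      + (1 / ((M + 1) * (L + 1) : ℝ)) *
          ∑ j ∈ Finset.Icc 1 M, ∑ l ∈ Finset.Icc 1 L,
            ‖DtDa j l 0 - P (DtDa j l 0)‖ ^ 2
      + (1 / ((M + 1) * (L + 1) * (S + 1) : ℝ)) *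
          ∑ j ∈ Finset.Icc 1 M, ∑ l ∈ Finset.Icc 1 L, ∑ k ∈ Finset.Icc 1 S,
            ‖DtDaDb j l k - P (DtDaDb j l k)‖ ^ 2
        = Λ) :
    ∀ j ≤ M, ∀ l ≤ L, ∀ k ≤ S,
      ‖u j l k - P (u j l k)‖ ^ 2 ≤
        4 * max 1 (max (2 * T ^ 2) (max (4 * T ^ 2 * (αL - α0) ^ 2)
            (8 * T ^ 2 * (αL - α0) ^ 2 * (βS - β0) ^ 2))) * Λ := by
  intro j hj l hl k hk
  subst hΔt hΔα hΔβ
  set Q : H →ₗ[ℝ] H := LinearMap.id - P with hQ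
  have key := norm_sq_le_of_mixed_backward_diffs (w := fun j l k => Q (u j l k))
    (Dt := fun j l k => Q (Dt j l k)) (DtDa := fun j l k => Q (DtDa j l k))
    (DtDaDb := fun j l k => Q (DtDaDb j l k))
    (div_ne_zero hT.ne' (Nat.cast_pos.2 hM).ne')
    (div_ne_zero (sub_ne_zero.2 hα.ne') (Nat.cast_pos.2 hL).ne')
    (div_ne_zero (sub_ne_zero.2 hβ.ne') (Nat.cast_pos.2 hS).ne')
    (fun j l k => by simp only [hDt, map_smul, map_sub])
    (fun j l k => by simp only [hDtDa, map_smul, map_sub])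
    (fun j l k => by simp only [hDtDaDb, map_smul, map_sub]) hj hl hk
  simp only [hQ, LinearMap.sub_apply, LinearMap.id_apply] at key
  have cM := sq_div_mul_self_le (Nat.one_le_cast.2 hM) T
  have cL := sq_div_mul_self_le (Nat.one_le_cast.2 hL) (αL - α0)
  have cS := sq_div_mul_self_le (Nat.one_le_cast.2 hS) (βS - β0)
  set wM := 2 * T ^ 2 / (M + 1)
  set wL := 2 * (αL - α0) ^ 2 / (L + 1)
  set wS := 2 * (βS - β0) ^ 2 / (S + 1)
  calc _ ≤ _ := key
    _ ≤ 4 * (_ + wM * _ + wM * wL * _ + wM * wL * wS * _) := by gcongr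
    _ ≤ _ := by
      refine (mul_le_mul_of_nonneg_left (add_weighted_le_max_mul (by positivity) (by positivity)
        (by positivity) (by positivity) (by positivity) (by positivity) (by positivity))
        zero_le_four).trans_eq ?_
      rw [← hsum]
      ring

/-- Lemma 8 of the paper: pointwise projection-error bound in the
three-parameter (time plus two parameters) POD setting. -/
theorem pointwise_projection_bound_two_parameters
    {H : Type*} [NormedAddCommGroup H] [InnerProductSpace ℝ H]
    (P : H →ₗ[ℝ] H)
    (hPidem : ∀ x, P (P x) = P x)
    (hPsa : ∀ x y : H, ⟪P x, y⟫ = ⟪x, P y⟫)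
    (M L S : ℕ) (hM : 1 ≤ M) (hL : 1 ≤ L) (hS : 1 ≤ S)
    (u : ℕ → ℕ → ℕ → H) (T α0 αL β0 βS : ℝ)
    (hT : 0 < T) (hα : α0 < αL) (hβ : β0 < βS)
    (Δt Δα Δβ : ℝ) (hΔt : Δt = T / M) (hΔα : Δα = (αL - α0) / L)
    (hΔβ : Δβ = (βS - β0) / S)
    (Dt : ℕ → ℕ → ℕ → H)
    (hDt : ∀ j l k, Dt j l k = Δt⁻¹ • (u j l k - u (j - 1) l k))
    (DtDa : ℕ → ℕ → ℕ → H)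
    (hDtDa : ∀ j l k, DtDa j l k = Δα⁻¹ • (Dt j l k - Dt j (l - 1) k))
    (DtDaDb : ℕ → ℕ → ℕ → H)
    (hDtDaDb : ∀ j l k, DtDaDb j l k = Δβ⁻¹ • (DtDa j l k - DtDa j l (k - 1)))
    (Λ : ℝ)
    (hsum :
      (∑ l ∈ Finset.range (L + 1), ∑ k ∈ Finset.range (S + 1),
          ‖u 0 l k - P (u 0 l k)‖ ^ 2)
      + (1 / (M + 1 : ℝ)) * ∑ j ∈ Finset.Icc 1 M, ∑ k ∈ Finset.range (S + 1),
          ‖Dt j 0 k - P (Dt j 0 k)‖ ^ 2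
      + (1 / ((M + 1) * (L + 1) : ℝ)) *
          ∑ j ∈ Finset.Icc 1 M, ∑ l ∈ Finset.Icc 1 L,
            ‖DtDa j l 0 - P (DtDa j l 0)‖ ^ 2
      + (1 / ((M + 1) * (L + 1) * (S + 1) : ℝ)) *
          ∑ j ∈ Finset.Icc 1 M, ∑ l ∈ Finset.Icc 1 L, ∑ k ∈ Finset.Icc 1 S,
            ‖DtDaDb j l k - P (DtDaDb j l k)‖ ^ 2
        = Λ) :
    ∀ j ≤ M, ∀ l ≤ L, ∀ k ≤ S,
      ‖u j l k - P (u j l k)‖ ^ 2 ≤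
        4 * max 1 (max (2 * T ^ 2) (max (4 * T ^ 2 * (αL - α0) ^ 2)
            (8 * T ^ 2 * (αL - α0) ^ 2 * (βS - β0) ^ 2))) * Λ :=
  pointwise_projection_bound_two_parameters_general P M L S hM hL hS u T α0 αL β0 βS hT hα hβ Δt Δα
    Δβ hΔt hΔα hΔβ Dt hDt DtDa hDtDa DtDaDb hDtDaDb Λ hsum
end
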